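/- For all integers i, j ≥ 1 and k ≥ 1, one has [w_{i,j,k}, x] = w_{i+1,j,k} · w_{i,j+1,k} · w_{i+1,j+1,k}. (The recursion for the elements w_{i,j,k} used in the proof of the proposition determining G^{2^k} ∩ Z.) -/

import Mathlib

namespace Paper

variable {G : Type*} [Group G]

/-- The paper's commutator `[a,b] = a⁻¹ b⁻¹ a b`. -/
def pc {G : Type*} [Group G] (a b : G) : G := a⁻¹ * b⁻¹ * a * b

/-- The left-normed iterated commutator `[a, x, (r)…, x]`. -/
def itc {G : Type*} [Group G] (x a : G) : ℕ → G
  | 0 => a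
  | r + 1 => pc (itc x a r) x

/-- `c_i`, where `c_1 = y` and `c_{i+1} = [c_i, x]`; equivalently `c_i = [y, x, (i-1)…, x]`. -/
def cc (x y : G) (i : ℕ) : G := itc x y (i - 1)

/-- `z_{m,n} = [c_m, c_n]`. -/
def zz (x y : G) (m n : ℕ) : G := pc (cc x y m) (cc x y n)

/-- `H = ⟨c_i : i ≥ 1⟩`. -/
def Hsub (x y : G) : Subgroup G :=
  Subgroup.closure {g | ∃ i, 1 ≤ i ∧ g = cc x y i}

/-- `Z = ⟨c_l², z_{m,n} : l, m, n ≥ 1⟩`. -/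
def Zsub (x y : G) : Subgroup G :=
  Subgroup.closure ({g | ∃ l, 1 ≤ l ∧ g = cc x y l ^ 2} ∪
    {g | ∃ m n, 1 ≤ m ∧ 1 ≤ n ∧ g = zz x y m n})

/-- `w_{i,j,k} = ∏_{t=1}^{2^k−1} [z_{i+t,j+t−1}, x, (2^k−1−t)…, x]`,
factors in order of increasing `t` (reindexed by `t ↦ t+1`). -/
def ww (x y : G) (i j k : ℕ) : G :=
  ((List.range (2 ^ k - 1)).map
    (fun t => itc x (zz x y (i + t + 1) (j + t)) (2 ^ k - 2 - t))).prod

/-- `L_k`, the normal closure of `{w_{i,j,k} : i,j ≥ 1} ∪ {z_{m,n} : m ≥ 2^k, n ≥ 1}`. -/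
def Lsub (x y : G) (k : ℕ) : Subgroup G :=
  Subgroup.normalClosure ({g | ∃ i j, 1 ≤ i ∧ 1 ≤ j ∧ g = ww x y i j k} ∪
    {g | ∃ m n, 2 ^ k ≤ m ∧ 1 ≤ n ∧ g = zz x y m n})

/-- `Q_k = ⟨c_l² : l ≥ 2^{k−1}⟩`. -/
def Qsub (x y : G) (k : ℕ) : Subgroup G :=
  Subgroup.closure {g | ∃ l, 2 ^ (k - 1) ≤ l ∧ g = cc x y l ^ 2}

/-- `d_k(h) = [h,x,(2^k−1)…,x]⁻¹ · x^{−2^k} · (xh)^{2^k}`. -/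
def dd (x y : G) (k : ℕ) (h : G) : G :=
  (itc x h (2 ^ k - 1))⁻¹ * (x ^ 2 ^ k)⁻¹ * (x * h) ^ 2 ^ k

/-- `Γ^{2^k} = ⟨g^{2^k} : g ∈ Γ⟩`. -/
def pow2Sub (G : Type*) [Group G] (k : ℕ) : Subgroup G :=
  Subgroup.closure {g | ∃ a : G, g = a ^ 2 ^ k}

/-- `ζ(h₁,h₂) = ∏_{ℓ=0}^{2^k−2} [h₁^x, x, (ℓ)…, x, h₂, x, (2^k−2−ℓ)…, x]`,
factors in order of increasing `ℓ`. -/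
def zeta (x : G) (k : ℕ) (h₁ h₂ : G) : G :=
  ((List.range (2 ^ k - 1)).map
    (fun l => itc x (pc (itc x (x⁻¹ * h₁ * x) l) h₂) (2 ^ k - 2 - l))).prod


/-!
Both `c_l²` and `z_{m,n}` lie in `H`, so (a) makes `Z` abelian. Conjugation by `x` sends `c_i` to
`c_i c_{i+1}`; hence it preserves `Z`, and `δ = [·, x]` is an endomorphism of the abelian group `Z`.
As the `z_{m,n}` are central in `H`, commutators of products of the `c_i` expand bilinearly, giving
`δ z_{m,n} = z_{m+1,n} z_{m,n+1} z_{m+1,n+1}`. Now `w_{i,j,k} = ∏_t δ^{N-1-t} z_{i+t+1,j+t}` with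
`N = 2^k - 1`; applying `δ` to it, moving `δ` inside each `δ^{N-1-t}` and using this recursion
factor by factor, the product splits in `Z` into the three required products.
-/

open scoped IsMulCommutative

theorem pc_eq_inv_mul_conj (u w : G) : pc u w = u⁻¹ * (w⁻¹ * u * w) := by
  unfold pc; group

theorem conj_pc (u v w : G) : w⁻¹ * pc u v * w = pc (w⁻¹ * u * w) (w⁻¹ * v * w) := by
  unfold pc; group

theorem pc_mul_left_of_commute {u v w : G} (h : Commute (pc u w) v) :
    pc (u * v) w = pc u w * pc v w := by
  have : pc (u * v) w = v⁻¹ * pc u w * v * pc v w := by unfold pc; group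
  rw [this, mul_assoc v⁻¹, h.eq, inv_mul_cancel_left]

theorem pc_mul_right_of_commute {u v w : G} (h : Commute (pc u v) w) :
    pc u (v * w) = pc u w * pc u v := by
  have : pc u (v * w) = pc u w * (w⁻¹ * pc u v * w) := by unfold pc; group
  rw [this, mul_assoc w⁻¹, h.eq, inv_mul_cancel_left]

theorem pc_mem {K : Subgroup G} {u v : G} (hu : u ∈ K) (hv : v ∈ K) : pc u v ∈ K :=
  mul_mem (mul_mem (mul_mem (inv_mem hu) (inv_mem hv)) hu) hv

theorem mul_sq_of_commute_pc {a b : G} (h : Commute (pc b a) b) :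
    (a * b) ^ 2 = a ^ 2 * pc b a * b ^ 2 := by
  have : (a * b) ^ 2 = a ^ 2 * (b * pc b a) * b := by simp only [pow_two]; unfold pc; group
  rw [this, ← h.eq, pow_two b]; simp only [mul_assoc]

theorem conj_mem_closure {s : Set G} {g z : G}
    (hs : ∀ a ∈ s, g⁻¹ * a * g ∈ Subgroup.closure s) (hz : z ∈ Subgroup.closure s) :
    g⁻¹ * z * g ∈ Subgroup.closure s := by
  have : Subgroup.closure s ≤ (Subgroup.closure s).comap (MulAut.conj g⁻¹).toMonoidHom :=
    (Subgroup.closure_le _).2 fun a ha => by simpa using hs a ha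
  simpa using this hz

section CommutatorHom

variable (K : Subgroup G) (x : G)

theorem pc_mem_of_conj_mem (hK : ∀ z ∈ K, x⁻¹ * z * x ∈ K) {z : G} (hz : z ∈ K) :
    pc z x ∈ K := by
  rw [pc_eq_inv_mul_conj]
  exact mul_mem (inv_mem hz) (hK z hz)

def pcHom [IsMulCommutative K] (hK : ∀ z ∈ K, x⁻¹ * z * x ∈ K) : K →* K where
  toFun z := ⟨pc z x, pc_mem_of_conj_mem K x hK z.2⟩
  map_one' := by ext; simp [pc]
  map_mul' u v := Subtype.ext <|
    pc_mul_left_of_commute (setLike_mul_comm (pc_mem_of_conj_mem K x hK u.2) v.2)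

theorem coe_pcHom_iterate [IsMulCommutative K] (hK : ∀ z ∈ K, x⁻¹ * z * x ∈ K) (z : K)
    (r : ℕ) : ((pcHom K x hK)^[r] z : G) = itc x z r := by
  induction r with
  | zero => rfl
  | succ r ih => rw [Function.iterate_succ_apply']; exact congrArg (pc · x) ih

end CommutatorHom

section DiagonalProduct

variable {M : Type*} [CommMonoid M] (δ : M →* M) (z : ℕ → ℕ → M)

def diagProd (i j N : ℕ) : M :=
  ((List.range N).map fun t => δ^[N - 1 - t] (z (i + t) (j + t))).prod

theorem map_diagProd (hz : ∀ m n, δ (z m n) = z (m + 1) n * z m (n + 1) * z (m + 1) (n + 1))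
    (i j N : ℕ) :
    δ (diagProd δ z i j N) =
      diagProd δ z (i + 1) j N * diagProd δ z i (j + 1) N * diagProd δ z (i + 1) (j + 1) N := by
  simp only [diagProd, map_list_prod, List.map_map, ← List.prod_map_mul]
  congr 1
  refine List.map_congr_left fun t _ => ?_
  simp only [Function.comp_apply, ← Function.iterate_succ_apply' δ, Function.iterate_succ_apply,
    hz, iterate_map_mul, add_right_comm _ 1 t]

end DiagonalProduct

section

variable (x y : G)

theorem cc_succ {m : ℕ} (hm : 1 ≤ m) : cc x y (m + 1) = pc (cc x y m) x := by
  obtain ⟨m, rfl⟩ := Nat.exists_eq_add_of_le' hm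
  rfl

theorem conj_cc {m : ℕ} (hm : 1 ≤ m) : x⁻¹ * cc x y m * x = cc x y m * cc x y (m + 1) := by
  rw [cc_succ x y hm]; unfold pc; group

theorem cc_mem_Hsub {m : ℕ} (hm : 1 ≤ m) : cc x y m ∈ Hsub x y :=
  Subgroup.subset_closure ⟨m, hm, rfl⟩

theorem cc_sq_mem_Zsub {l : ℕ} (hl : 1 ≤ l) : cc x y l ^ 2 ∈ Zsub x y :=
  Subgroup.subset_closure (Or.inl ⟨l, hl, rfl⟩)

theorem zz_mem_Zsub {m n : ℕ} (hm : 1 ≤ m) (hn : 1 ≤ n) : zz x y m n ∈ Zsub x y :=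
  Subgroup.subset_closure (Or.inr ⟨m, n, hm, hn, rfl⟩)

theorem Zsub_le_Hsub : Zsub x y ≤ Hsub x y := by
  refine (Subgroup.closure_le _).2 ?_
  rintro _ (⟨l, hl, rfl⟩ | ⟨m, n, hm, hn, rfl⟩)
  · exact pow_mem (cc_mem_Hsub x y hl) 2
  · exact pc_mem (cc_mem_Hsub x y hm) (cc_mem_Hsub x y hn)

/-- `z_{m+1,n+1}` as an element of `Z`; the shift makes every index admissible. -/
def zzZ (m n : ℕ) : Zsub x y :=
  ⟨zz x y (m + 1) (n + 1), zz_mem_Zsub x y (by omega) (by omega)⟩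

end

section

variable {x y : G}

theorem isMulCommutative_Zsub (hca : ∀ z ∈ Zsub x y, ∀ h ∈ Hsub x y, z * h = h * z) :
    IsMulCommutative (Zsub x y) :=
  .of_setLike_mul_comm fun a ha b hb => hca a ha b (Zsub_le_Hsub x y hb)

theorem conj_cc_sq (hca : ∀ z ∈ Zsub x y, ∀ h ∈ Hsub x y, z * h = h * z) {l : ℕ}
    (hl : 1 ≤ l) :
    x⁻¹ * cc x y l ^ 2 * x = cc x y l ^ 2 * zz x y (l + 1) l * cc x y (l + 1) ^ 2 := by
  have hconj : x⁻¹ * cc x y l ^ 2 * x = (x⁻¹ * cc x y l * x) ^ 2 := by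
    simp only [pow_two]; group
  rw [hconj, conj_cc x y hl]
  exact mul_sq_of_commute_pc
    (hca _ (zz_mem_Zsub x y (by omega) hl) _ (cc_mem_Hsub x y (by omega)))

theorem conj_zz (hca : ∀ z ∈ Zsub x y, ∀ h ∈ Hsub x y, z * h = h * z) {m n : ℕ}
    (hm : 1 ≤ m) (hn : 1 ≤ n) :
    x⁻¹ * zz x y m n * x =
      zz x y m (n + 1) * zz x y m n * (zz x y (m + 1) (n + 1) * zz x y (m + 1) n) := by
  have expand_right : ∀ {p}, 1 ≤ p →
      pc (cc x y p) (cc x y n * cc x y (n + 1)) = zz x y p (n + 1) * zz x y p n := fun hp =>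
    pc_mul_right_of_commute (hca _ (zz_mem_Zsub x y hp hn) _ (cc_mem_Hsub x y (by omega)))
  have hcomm : Commute (pc (cc x y m) (cc x y n * cc x y (n + 1))) (cc x y (m + 1)) := by
    rw [expand_right hm]
    exact hca _ (mul_mem (zz_mem_Zsub x y hm (by omega)) (zz_mem_Zsub x y hm hn)) _
      (cc_mem_Hsub x y (by omega))
  calc x⁻¹ * zz x y m n * x = pc (cc x y m * cc x y (m + 1)) (cc x y n * cc x y (n + 1)) := by
        rw [zz, conj_pc, conj_cc x y hm, conj_cc x y hn]
    _ = _ := by rw [pc_mul_left_of_commute hcomm, expand_right hm, expand_right (by omega)]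

theorem conj_mem_Zsub (hca : ∀ z ∈ Zsub x y, ∀ h ∈ Hsub x y, z * h = h * z) :
    ∀ z ∈ Zsub x y, x⁻¹ * z * x ∈ Zsub x y := by
  refine fun z => conj_mem_closure ?_
  rintro _ (⟨l, hl, rfl⟩ | ⟨m, n, hm, hn, rfl⟩)
  · rw [conj_cc_sq hca hl]
    exact mul_mem (mul_mem (cc_sq_mem_Zsub x y hl) (zz_mem_Zsub x y (by omega) hl))
      (cc_sq_mem_Zsub x y (by omega))
  · rw [conj_zz hca hm hn]
    exact mul_mem (mul_mem (zz_mem_Zsub x y hm (by omega)) (zz_mem_Zsub x y hm hn))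
      (mul_mem (zz_mem_Zsub x y (by omega) (by omega)) (zz_mem_Zsub x y (by omega) hn))

theorem pcHom_zzZ (hca : ∀ z ∈ Zsub x y, ∀ h ∈ Hsub x y, z * h = h * z)
    [IsMulCommutative (Zsub x y)] (m n : ℕ) :
    pcHom (Zsub x y) x (conj_mem_Zsub hca) (zzZ x y m n) =
      zzZ x y (m + 1) n * zzZ x y m (n + 1) * zzZ x y (m + 1) (n + 1) := by
  have hconj : (⟨_, conj_mem_Zsub hca _ (zzZ x y m n).2⟩ : Zsub x y) =
      zzZ x y m (n + 1) * zzZ x y m n * (zzZ x y (m + 1) (n + 1) * zzZ x y (m + 1) n) :=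
    Subtype.ext (conj_zz hca (by omega) (by omega))
  have hpc : pcHom (Zsub x y) x (conj_mem_Zsub hca) (zzZ x y m n) =
      (zzZ x y m n)⁻¹ * ⟨_, conj_mem_Zsub hca _ (zzZ x y m n).2⟩ :=
    Subtype.ext (pc_eq_inv_mul_conj _ _)
  rw [hpc, hconj, mul_comm (zzZ x y m (n + 1)), mul_assoc (zzZ x y m n), inv_mul_cancel_left]
  ac_rfl

theorem ww_eq_diagProd (hca : ∀ z ∈ Zsub x y, ∀ h ∈ Hsub x y, z * h = h * z)
    [IsMulCommutative (Zsub x y)] (i j k : ℕ) :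
    ww x y i (j + 1) k =
      diagProd (pcHom (Zsub x y) x (conj_mem_Zsub hca)) (zzZ x y) i j (2 ^ k - 1) := by
  rw [diagProd, Subgroup.val_list_prod, List.map_map, ww]
  congr 1
  refine List.map_congr_left fun t _ => ?_
  rw [Function.comp_apply, coe_pcHom_iterate]
  simp only [zzZ, add_right_comm j 1 t, Nat.sub_sub]

end

theorem ww_recursion_general (x y : G)
    (hca : ∀ z ∈ Zsub x y, ∀ h ∈ Hsub x y, z * h = h * z)
    (i j k : ℕ) (hj : 1 ≤ j) :
    pc (ww x y i j k) x =
      ww x y (i + 1) j k * ww x y i (j + 1) k * ww x y (i + 1) (j + 1) k := by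
  have := isMulCommutative_Zsub hca
  obtain ⟨j, rfl⟩ := Nat.exists_eq_add_of_le' hj
  simp only [ww_eq_diagProd hca]
  exact congrArg Subtype.val (map_diagProd _ _ (pcHom_zzZ hca) i j _)

theorem ww_recursion (x y : G)
    (hca : ∀ z ∈ Zsub x y, ∀ h ∈ Hsub x y, z * h = h * z)
    (hz2 : ∀ z ∈ Zsub x y, z ^ 2 = 1)
    (i j k : ℕ) (hi : 1 ≤ i) (hj : 1 ≤ j) (hk : 1 ≤ k) :
    pc (ww x y i j k) x =
      ww x y (i + 1) j k * ww x y i (j + 1) k * ww x y (i + 1) (j + 1) k :=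
  ww_recursion_general x y hca i j k hj

end Paper
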